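/- arXiv:1101.5598 — 2 statements merged into one kernel-verified Lean document; each statement's English description precedes it below -/
import Mathlib

section
/- If finite nonempty subsets S', T', U' of a group G fulfill the TPP, then there exist subsets S, T, U of G with |S| = |S'|, |T| = |T'|, |U| = |U'|, such that S, T, U fulfill the TPP, each contains the identity, and the pairwise intersections S ∩ T, T ∩ U, S ∩ U all equal {1}. -/
/-! Translating each set on the right by the inverse of one of its elements leaves its quotient
set `Q` unchanged, so it preserves both the cardinalities and the TPP, and makes `1` a member of
all three sets. For such sets, an element `x ∈ S ∩ T` gives `x ∈ Q S`, `x⁻¹ ∈ Q T`, `1 ∈ Q U`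
with product `1`, so the TPP forces `x = 1`; the other intersections follow because the TPP is
invariant under cyclic rotation of the triple. -/

variable {G : Type*} [Group G]

def Q (X : Set G) : Set G := {g | ∃ x ∈ X, ∃ y ∈ X, g = x * y⁻¹}

def TPP (S T U : Set G) : Prop :=
  ∀ s ∈ Q S, ∀ t ∈ Q T, ∀ u ∈ Q U, (s * t * u = 1 ↔ s = 1 ∧ t = 1 ∧ u = 1)

lemma Q_image_mul_right (X : Set G) (g : G) : Q ((· * g) '' X) = Q X := by
  ext a
  constructor
  · rintro ⟨_, ⟨x, hx, rfl⟩, _, ⟨y, hy, rfl⟩, rfl⟩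
    exact ⟨x, hx, y, hy, by group⟩
  · rintro ⟨x, hx, y, hy, rfl⟩
    exact ⟨x * g, ⟨x, hx, rfl⟩, y * g, ⟨y, hy, rfl⟩, by group⟩

lemma one_mem_image_mul_inv {X : Set G} {x : G} (hx : x ∈ X) : (1 : G) ∈ (· * x⁻¹) '' X :=
  ⟨x, hx, mul_inv_cancel x⟩

lemma tpp_image_mul_right_iff (S T U : Set G) (a b c : G) :
    TPP ((· * a) '' S) ((· * b) '' T) ((· * c) '' U) ↔ TPP S T U := by
  simp only [TPP, Q_image_mul_right]

namespace TPP

variable {S T U : Set G}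

theorem rotate (h : TPP S T U) : TPP T U S := by
  intro t ht u hu s hs
  have hcycle : t * u * s = 1 ↔ s * t * u = 1 := by
    rw [mul_eq_one_comm, mul_assoc]
  rw [hcycle, h s hs t ht u hu]
  tauto

theorem inter_eq_one (h : TPP S T U) (hS : (1 : G) ∈ S) (hT : (1 : G) ∈ T) (hU : U.Nonempty) :
    S ∩ T = {1} := by
  obtain ⟨u, hu⟩ := hU
  refine Set.eq_singleton_iff_unique_mem.mpr ⟨⟨hS, hT⟩, fun x ⟨hxS, hxT⟩ => ?_⟩
  have hxQ : x ∈ Q S := ⟨x, hxS, 1, hS, by group⟩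
  have hxinvQ : x⁻¹ ∈ Q T := ⟨1, hT, x, hxT, by group⟩
  have honeQ : (1 : G) ∈ Q U := ⟨u, hu, u, hu, (mul_inv_cancel u).symm⟩
  exact ((h x hxQ x⁻¹ hxinvQ 1 honeQ).mp (by group)).1

end TPP

theorem main_result_general (S' T' U' : Set G) (hS : S'.Nonempty) (hT : T'.Nonempty)
    (hU : U'.Nonempty)
    (h : TPP S' T' U') :
    ∃ S T U : Set G, S.ncard = S'.ncard ∧ T.ncard = T'.ncard ∧ U.ncard = U'.ncard ∧
      TPP S T U ∧ (1 : G) ∈ S ∧ (1 : G) ∈ T ∧ (1 : G) ∈ U ∧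
      S ∩ T = {1} ∧ T ∩ U = {1} ∧ S ∩ U = {1} := by
  obtain ⟨s₀, hs₀⟩ := hS
  obtain ⟨t₀, ht₀⟩ := hT
  obtain ⟨u₀, hu₀⟩ := hU
  have hTPP := (tpp_image_mul_right_iff S' T' U' s₀⁻¹ t₀⁻¹ u₀⁻¹).mpr h
  have h1S := one_mem_image_mul_inv hs₀
  have h1T := one_mem_image_mul_inv ht₀
  have h1U := one_mem_image_mul_inv hu₀
  refine ⟨_, _, _, Set.ncard_image_of_injective _ (mul_left_injective _),
    Set.ncard_image_of_injective _ (mul_left_injective _),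
    Set.ncard_image_of_injective _ (mul_left_injective _), hTPP, h1S, h1T, h1U,
    hTPP.inter_eq_one h1S h1T ⟨1, h1U⟩, hTPP.rotate.inter_eq_one h1T h1U ⟨1, h1S⟩, ?_⟩
  rw [Set.inter_comm]
  exact hTPP.rotate.rotate.inter_eq_one h1U h1S ⟨1, h1T⟩

theorem main_result (S' T' U' : Set G) (hS : S'.Nonempty) (hT : T'.Nonempty)
    (hU : U'.Nonempty) (hSf : S'.Finite) (hTf : T'.Finite) (hUf : U'.Finite)
    (h : TPP S' T' U') :
    ∃ S T U : Set G, S.ncard = S'.ncard ∧ T.ncard = T'.ncard ∧ U.ncard = U'.ncard ∧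
      TPP S T U ∧ (1 : G) ∈ S ∧ (1 : G) ∈ T ∧ (1 : G) ∈ U ∧
      S ∩ T = {1} ∧ T ∩ U = {1} ∧ S ∩ U = {1} :=
  main_result_general S' T' U' hS hT hU h
end

section
/- If nonempty subsets S, T, U of a finite group G fulfill the TPP, then |Q(S)| + |Q(T)| + |Q(U)| ≤ |G| + 2. -/
/-! The TPP forces `Q S`, `Q T`, `Q U` to meet pairwise only in `1`: an element `x ≠ 1` of
`Q S ∩ Q T` would give the nontrivial solution `x * x⁻¹ * 1 = 1`, as each `Q X` is closed under
inversion. Three subsets of `G` that pairwise meet exactly in one point have total size at most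
`|G| + 2`. -/

variable {G : Type*} [Group G]

theorem one_mem_Q {X : Set G} (hX : X.Nonempty) : (1 : G) ∈ Q X := by
  obtain ⟨x, hx⟩ := hX
  exact ⟨x, hx, x, hx, (mul_inv_cancel x).symm⟩

theorem inv_mem_Q {X : Set G} {g : G} (hg : g ∈ Q X) : g⁻¹ ∈ Q X := by
  obtain ⟨x, hx, y, hy, rfl⟩ := hg
  exact ⟨y, hy, x, hx, by group⟩

theorem TPP.rotate_s7 {S T U : Set G} (h : TPP S T U) : TPP T U S := by
  intro t ht u hu s hs
  rw [mul_eq_one_comm, ← mul_assoc, h s hs t ht u hu]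
  tauto

theorem TPP.Q_inter_Q_eq_one {S T U : Set G} (hS : S.Nonempty) (hT : T.Nonempty)
    (hU : U.Nonempty) (h : TPP S T U) : Q S ∩ Q T = {1} := by
  refine Set.eq_singleton_iff_unique_mem.mpr ⟨⟨one_mem_Q hS, one_mem_Q hT⟩, ?_⟩
  rintro x ⟨hxS, hxT⟩
  exact ((h x hxS x⁻¹ (inv_mem_Q hxT) 1 (one_mem_Q hU)).mp (by group)).1

theorem Set.ncard_add_ncard_add_ncard_le_of_inter_eq_singleton {α : Type*} [Finite α]
    {A B C : Set α} {a : α} (hAB : A ∩ B = {a}) (hBC : B ∩ C = {a}) (hCA : C ∩ A = {a}) :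
    A.ncard + B.ncard + C.ncard ≤ Nat.card α + 2 := by
  have hABC : (A ∪ B) ∩ C = {a} := by
    rw [Set.union_inter_distrib_right, Set.inter_comm, hCA, hBC, Set.union_self]
  have hAB_card := Set.ncard_union_add_ncard_inter A B
  have hABC_card := Set.ncard_union_add_ncard_inter (A ∪ B) C
  rw [hAB, Set.ncard_singleton] at hAB_card
  rw [hABC, Set.ncard_singleton] at hABC_card
  have := Set.ncard_le_card (A ∪ B ∪ C)
  omega

theorem sum_card_Q_le [Finite G] (S T U : Set G) (hS : S.Nonempty) (hT : T.Nonempty)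
    (hU : U.Nonempty) (h : TPP S T U) :
    (Q S).ncard + (Q T).ncard + (Q U).ncard ≤ Nat.card G + 2 :=
  Set.ncard_add_ncard_add_ncard_le_of_inter_eq_singleton (h.Q_inter_Q_eq_one hS hT hU)
    (h.rotate_s7.Q_inter_Q_eq_one hT hU hS) (h.rotate_s7.rotate_s7.Q_inter_Q_eq_one hU hS hT)
end
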